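/- Suppose λ^ℓ satisfies the recursion (λ^ℓ)^T = (λ^{ℓ+1})^T diag(D^{ℓ+1}) W^{ℓ+1} with D^{ℓ+1} = D_0^{ℓ+1} + ε D_1^{ℓ+1}, initialized at (λ^L)^T = W^{L+1}. Let λ_0^ℓ satisfy the same recursion with D_0 in place of D. Then ‖λ^ℓ − λ_0^ℓ‖ ≤ ε ‖W^{L+1}‖ (∏_{k=ℓ+1}^L ‖W^k‖) ∑_{i=ℓ+1}^L ‖D_1^i‖ ∏_{ℓ+1 ≤ k ≤ L, k ≠ i} ‖D_0^k‖ + O(ε^2), where the O(ε^2) constant depends only on the norms ‖W^k‖, ‖D_0^k‖, ‖D_1^k‖. -/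

import Mathlib

/-- Hadamard (entrywise) product of vectors. -/
def had {n : ℕ} (a b : EuclideanSpace ℝ (Fin n)) : EuclideanSpace ℝ (Fin n) :=
  WithLp.toLp 2 (fun i => a i * b i)

lemma norm_had_le {n : ℕ} (a b : EuclideanSpace ℝ (Fin n)) : ‖had a b‖ ≤ ‖a‖ * ‖b‖ := by
  have hn : ∀ x : EuclideanSpace ℝ (Fin n), ‖x‖ = Real.sqrt (∑ i, x i ^ 2) := by
    intro x
    rw [EuclideanSpace.norm_eq]
    simp [Real.norm_eq_abs, sq_abs]
  have h2 : ∑ i, (had a b) i ^ 2 ≤ (∑ j, a j ^ 2) * ∑ i, b i ^ 2 := by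
    calc ∑ i, (had a b) i ^ 2 ≤ ∑ i, (∑ j, a j ^ 2) * b i ^ 2 := by
          apply Finset.sum_le_sum
          intro i _
          have h1 : a i ^ 2 ≤ ∑ j, a j ^ 2 :=
            Finset.single_le_sum (fun j _ => sq_nonneg (a j)) (Finset.mem_univ i)
          have hb : (0:ℝ) ≤ b i ^ 2 := sq_nonneg _
          have : (had a b) i ^ 2 = a i ^ 2 * b i ^ 2 := by
            simp [had, mul_pow]
          rw [this]
          exact mul_le_mul_of_nonneg_right h1 hb
      _ = (∑ j, a j ^ 2) * ∑ i, b i ^ 2 := by rw [Finset.mul_sum]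
  rw [hn, hn, hn]
  rw [← Real.sqrt_mul (by positivity)]
  exact Real.sqrt_le_sqrt h2

lemma had_key {n : ℕ} (d0 d1 x y : EuclideanSpace ℝ (Fin n)) (ε : ℝ) :
    had (d0 + ε • d1) x - had d0 y = had d0 (x - y) + ε • had d1 x := by
  ext i
  show (d0 i + ε * d1 i) * x i - d0 i * y i = d0 i * (x i - y i) + ε * (d1 i * x i)
  ring

lemma Icc_insert_split (ℓ L : ℕ) (h : ℓ + 1 ≤ L) :
    Finset.Icc (ℓ+1) L = insert (ℓ+1) (Finset.Icc (ℓ+2) L) := by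
  ext x
  simp only [Finset.mem_Icc, Finset.mem_insert]
  omega

lemma S_rec (L ℓ : ℕ) (h : ℓ + 1 ≤ L) (nw : ℝ) (wn d0 d1 : ℕ → ℝ) :
    nw * (∏ k ∈ Finset.Icc (ℓ+1) L, wn k) *
        ∑ i ∈ Finset.Icc (ℓ+1) L, d1 i * ∏ k ∈ (Finset.Icc (ℓ+1) L).erase i, d0 k
    = wn (ℓ+1) * (d0 (ℓ+1) * (nw * (∏ k ∈ Finset.Icc (ℓ+2) L, wn k) *
        ∑ i ∈ Finset.Icc (ℓ+2) L, d1 i * ∏ k ∈ (Finset.Icc (ℓ+2) L).erase i, d0 k)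
      + d1 (ℓ+1) * (nw * ∏ k ∈ Finset.Icc (ℓ+2) L, (wn k * d0 k))) := by
  have hnot : ℓ + 1 ∉ Finset.Icc (ℓ+2) L := by simp [Finset.mem_Icc]
  rw [Icc_insert_split ℓ L h, Finset.prod_insert hnot, Finset.sum_insert hnot,
    Finset.erase_insert hnot]
  have hcongr : ∀ i ∈ Finset.Icc (ℓ+2) L,
      d1 i * ∏ k ∈ (insert (ℓ+1) (Finset.Icc (ℓ+2) L)).erase i, d0 k
      = d0 (ℓ+1) * (d1 i * ∏ k ∈ (Finset.Icc (ℓ+2) L).erase i, d0 k) := by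
    intro i hi
    have hne : ℓ + 1 ≠ i := by
      have := Finset.mem_Icc.mp hi; omega
    rw [Finset.erase_insert_of_ne hne,
      Finset.prod_insert (fun hc => hnot (Finset.mem_of_mem_erase hc))]
    ring
  rw [Finset.sum_congr rfl hcongr, ← Finset.mul_sum, Finset.prod_mul_distrib]
  ring

lemma P_rec (L ℓ : ℕ) (h : ℓ + 1 ≤ L) (nw : ℝ) (wn d0 : ℕ → ℝ) :
    nw * ∏ k ∈ Finset.Icc (ℓ+1) L, (wn k * d0 k)
    = wn (ℓ+1) * (d0 (ℓ+1) * (nw * ∏ k ∈ Finset.Icc (ℓ+2) L, (wn k * d0 k))) := by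
  have hnot : ℓ + 1 ∉ Finset.Icc (ℓ+2) L := by simp [Finset.mem_Icc]
  rw [Icc_insert_split ℓ L h, Finset.prod_insert hnot]
  ring

def gAux (L : ℕ) (A d0 d1 S : ℕ → ℝ) : ℕ → ℝ
  | 0 => 0
  | m+1 => A (L-(m+1)) * (d0 (L-m) * gAux L A d0 d1 S m
      + d1 (L-m) * (S (L-m) + gAux L A d0 d1 S m))

lemma gAux_nonneg (L : ℕ) (A d0 d1 S : ℕ → ℝ) (hA : ∀ k, 0 ≤ A k) (h0 : ∀ k, 0 ≤ d0 k)
    (h1 : ∀ k, 0 ≤ d1 k) (hS : ∀ k, 0 ≤ S k) : ∀ m, 0 ≤ gAux L A d0 d1 S m := by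
  intro m
  induction m with
  | zero => simp [gAux]
  | succ m ih =>
    have := hA (L-(m+1)); have := h0 (L-m); have := h1 (L-m); have := hS (L-m)
    simp only [gAux]
    positivity

lemma arith_key (ε d0 d1 x y S' P' gm : ℝ) (hε0 : 0 ≤ ε) (hε1 : ε ≤ 1)
    (hd0 : 0 ≤ d0) (hd1 : 0 ≤ d1) (hg : 0 ≤ gm)
    (hx : x ≤ ε * S' + gm * ε ^ 2) (hy : y ≤ P' + (ε * S' + gm * ε ^ 2)) :
    d0 * x + ε * (d1 * y) ≤ ε * (d0 * S' + d1 * P') + (d0 * gm + d1 * (S' + gm)) * ε ^ 2 := by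
  have hε3 : ε ^ 3 ≤ ε ^ 2 := by nlinarith
  nlinarith [mul_le_mul_of_nonneg_left hx hd0,
    mul_le_mul_of_nonneg_left hy (mul_nonneg hε0 hd1),
    mul_nonneg (mul_nonneg hd1 hg) (sub_nonneg.mpr hε3)]

lemma gAux_succ (L : ℕ) (A d0 d1 S : ℕ → ℝ) (m : ℕ) :
    gAux L A d0 d1 S (m+1) = A (L-(m+1)) * (d0 (L-m) * gAux L A d0 d1 S m
      + d1 (L-m) * (S (L-m) + gAux L A d0 d1 S m)) := rfl

/-- First-order bound for perturbed backpropagation: if `λ` satisfies the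
recursion with `D = D₀ + ε D₁` and `λ₀` the recursion with `D₀`, both initialized
at `w`, then `‖λ^ℓ - λ₀^ℓ‖ ≤ ε ‖w‖ (∏‖W^k‖)(∑_i ‖D₁^i‖ ∏_{k≠i} ‖D₀^k‖) + C ε²`
with `C` depending only on the data (not on `ε ∈ [0,1]`). -/
theorem stmt_13 (L : ℕ) (dims : ℕ → ℕ)
    (W : (k : ℕ) → EuclideanSpace ℝ (Fin (dims k)) →L[ℝ] EuclideanSpace ℝ (Fin (dims (k+1))))
    (D0 D1 : (k : ℕ) → EuclideanSpace ℝ (Fin (dims k)))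
    (w : EuclideanSpace ℝ (Fin (dims L))) :
    ∃ C : ℝ, 0 ≤ C ∧ ∀ ε : ℝ, 0 ≤ ε → ε ≤ 1 →
      ∀ lam lam0 : (ℓ : ℕ) → EuclideanSpace ℝ (Fin (dims ℓ)),
      lam L = w → lam0 L = w →
      (∀ ℓ, ℓ < L → lam ℓ = ContinuousLinearMap.adjoint (W ℓ)
          (had (D0 (ℓ+1) + ε • D1 (ℓ+1)) (lam (ℓ+1)))) →
      (∀ ℓ, ℓ < L → lam0 ℓ = ContinuousLinearMap.adjoint (W ℓ)
          (had (D0 (ℓ+1)) (lam0 (ℓ+1)))) →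
      ∀ ℓ, ℓ ≤ L →
        ‖lam ℓ - lam0 ℓ‖ ≤
          ε * (‖w‖ * (∏ k ∈ Finset.Icc (ℓ+1) L, ‖W (k-1)‖) *
            ∑ i ∈ Finset.Icc (ℓ+1) L, ‖D1 i‖ * ∏ k ∈ (Finset.Icc (ℓ+1) L).erase i, ‖D0 k‖)
          + C * ε ^ 2 := by
  classical
  -- abbreviations (as plain functions)
  set S : ℕ → ℝ := fun ℓ => ‖w‖ * (∏ k ∈ Finset.Icc (ℓ+1) L, ‖W (k-1)‖) *
      ∑ i ∈ Finset.Icc (ℓ+1) L, ‖D1 i‖ * ∏ k ∈ (Finset.Icc (ℓ+1) L).erase i, ‖D0 k‖ with hSdef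
  set P : ℕ → ℝ := fun ℓ => ‖w‖ * ∏ k ∈ Finset.Icc (ℓ+1) L, (‖W (k-1)‖ * ‖D0 k‖) with hPdef
  have hSnn : ∀ ℓ, 0 ≤ S ℓ := by
    intro ℓ
    rw [hSdef]
    have : 0 ≤ ∑ i ∈ Finset.Icc (ℓ+1) L, ‖D1 i‖ * ∏ k ∈ (Finset.Icc (ℓ+1) L).erase i, ‖D0 k‖ :=
      Finset.sum_nonneg fun i _ => mul_nonneg (norm_nonneg _)
        (Finset.prod_nonneg fun k _ => norm_nonneg _)
    positivity
  have hPnn : ∀ ℓ, 0 ≤ P ℓ := by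
    intro ℓ
    rw [hPdef]
    have : 0 ≤ ∏ k ∈ Finset.Icc (ℓ+1) L, (‖W (k-1)‖ * ‖D0 k‖) :=
      Finset.prod_nonneg fun k _ => mul_nonneg (norm_nonneg _) (norm_nonneg _)
    positivity
  set g : ℕ → ℝ := gAux L (fun k => ‖W k‖) (fun k => ‖D0 k‖) (fun k => ‖D1 k‖) S with hgdef
  have hgnn : ∀ m, 0 ≤ g m :=
    gAux_nonneg L _ _ _ _ (fun k => norm_nonneg _) (fun k => norm_nonneg _)
      (fun k => norm_nonneg _) hSnn
  refine ⟨∑ m ∈ Finset.range (L+1), g m, Finset.sum_nonneg fun m _ => hgnn m, ?_⟩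
  intro ε hε0 hε1 lam lam0 hlamL hlam0L hrec hrec0
  -- adjoint norm bound
  have hadj : ∀ (ℓ : ℕ) (v : EuclideanSpace ℝ (Fin (dims (ℓ+1)))),
      ‖ContinuousLinearMap.adjoint (W ℓ) v‖ ≤ ‖W ℓ‖ * ‖v‖ := by
    intro ℓ v
    calc ‖ContinuousLinearMap.adjoint (W ℓ) v‖ ≤ ‖ContinuousLinearMap.adjoint (W ℓ)‖ * ‖v‖ :=
          (ContinuousLinearMap.adjoint (W ℓ)).le_opNorm v
      _ = ‖W ℓ‖ * ‖v‖ := by rw [ContinuousLinearMap.adjoint.norm_map]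
  -- bound on lam0
  have hlam0 : ∀ m, m ≤ L → ‖lam0 (L - m)‖ ≤ P (L - m) := by
    intro m
    induction m with
    | zero =>
      intro _
      simp only [Nat.sub_zero, hlam0L, hPdef]
      rw [Finset.Icc_eq_empty (by omega), Finset.prod_empty, mul_one]
    | succ m ih =>
      intro hm
      have hℓ : L - (m+1) < L := by omega
      have h1 : L - (m+1) + 1 = L - m := by omega
      rw [hrec0 _ hℓ]
      set ℓ := L - (m+1) with hℓdef
      have hP : P ℓ = ‖W ℓ‖ * (‖D0 (ℓ+1)‖ * P (ℓ+1)) := by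
        simp only [hPdef]
        exact P_rec L ℓ (by omega) ‖w‖ (fun k => ‖W (k-1)‖) (fun k => ‖D0 k‖)
      calc ‖ContinuousLinearMap.adjoint (W ℓ) (had (D0 (ℓ+1)) (lam0 (ℓ+1)))‖
          ≤ ‖W ℓ‖ * ‖had (D0 (ℓ+1)) (lam0 (ℓ+1))‖ := hadj _ _
        _ ≤ ‖W ℓ‖ * (‖D0 (ℓ+1)‖ * ‖lam0 (ℓ+1)‖) := by
            have := norm_had_le (D0 (ℓ+1)) (lam0 (ℓ+1))
            exact mul_le_mul_of_nonneg_left this (norm_nonneg _)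
        _ ≤ ‖W ℓ‖ * (‖D0 (ℓ+1)‖ * P (ℓ+1)) := by
            have hih : ‖lam0 (ℓ+1)‖ ≤ P (ℓ+1) := by
              rw [h1]; exact ih (by omega)
            have := mul_le_mul_of_nonneg_left hih (norm_nonneg (D0 (ℓ+1)))
            exact mul_le_mul_of_nonneg_left this (norm_nonneg _)
        _ = P ℓ := hP.symm
  -- main induction
  have main : ∀ m, m ≤ L → ‖lam (L - m) - lam0 (L - m)‖ ≤ ε * S (L - m) + g m * ε ^ 2 := by
    intro m
    induction m with
    | zero =>
      intro _
      simp only [Nat.sub_zero, hlamL, hlam0L, sub_self, norm_zero, hgdef, gAux, zero_mul,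
        add_zero]
      exact mul_nonneg hε0 (hSnn L)
    | succ m ih =>
      intro hm
      have hℓ : L - (m+1) < L := by omega
      have h1 : L - (m+1) + 1 = L - m := by omega
      set ℓ := L - (m+1) with hℓdef
      -- decomposition of the difference
      have hdiff : lam ℓ - lam0 ℓ = ContinuousLinearMap.adjoint (W ℓ)
          (had (D0 (ℓ+1)) (lam (ℓ+1) - lam0 (ℓ+1)) + ε • had (D1 (ℓ+1)) (lam (ℓ+1))) := by
        rw [hrec ℓ hℓ, hrec0 ℓ hℓ, ← map_sub, had_key]
      have hx : ‖lam (ℓ+1) - lam0 (ℓ+1)‖ ≤ ε * S (ℓ+1) + g m * ε ^ 2 := by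
        rw [h1]; exact ih (by omega)
      have hy : ‖lam (ℓ+1)‖ ≤ P (ℓ+1) + ‖lam (ℓ+1) - lam0 (ℓ+1)‖ := by
        have h0 : ‖lam0 (ℓ+1)‖ ≤ P (ℓ+1) := by rw [h1]; exact hlam0 m (by omega)
        calc ‖lam (ℓ+1)‖ = ‖lam0 (ℓ+1) + (lam (ℓ+1) - lam0 (ℓ+1))‖ := by
              congr 1
              abel
          _ ≤ ‖lam0 (ℓ+1)‖ + ‖lam (ℓ+1) - lam0 (ℓ+1)‖ := norm_add_le _ _
          _ ≤ P (ℓ+1) + ‖lam (ℓ+1) - lam0 (ℓ+1)‖ := by linarith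
      have hbound : ‖lam ℓ - lam0 ℓ‖ ≤ ‖W ℓ‖ * (‖D0 (ℓ+1)‖ * ‖lam (ℓ+1) - lam0 (ℓ+1)‖
          + ε * (‖D1 (ℓ+1)‖ * ‖lam (ℓ+1)‖)) := by
        rw [hdiff]
        calc ‖ContinuousLinearMap.adjoint (W ℓ) _‖
            ≤ ‖W ℓ‖ * ‖had (D0 (ℓ+1)) (lam (ℓ+1) - lam0 (ℓ+1))
                + ε • had (D1 (ℓ+1)) (lam (ℓ+1))‖ := hadj _ _
          _ ≤ ‖W ℓ‖ * (‖D0 (ℓ+1)‖ * ‖lam (ℓ+1) - lam0 (ℓ+1)‖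
                + ε * (‖D1 (ℓ+1)‖ * ‖lam (ℓ+1)‖)) := by
              apply mul_le_mul_of_nonneg_left _ (norm_nonneg _)
              calc ‖had (D0 (ℓ+1)) (lam (ℓ+1) - lam0 (ℓ+1)) + ε • had (D1 (ℓ+1)) (lam (ℓ+1))‖
                  ≤ ‖had (D0 (ℓ+1)) (lam (ℓ+1) - lam0 (ℓ+1))‖
                      + ‖ε • had (D1 (ℓ+1)) (lam (ℓ+1))‖ := norm_add_le _ _
                _ ≤ ‖D0 (ℓ+1)‖ * ‖lam (ℓ+1) - lam0 (ℓ+1)‖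
                      + ε * (‖D1 (ℓ+1)‖ * ‖lam (ℓ+1)‖) := by
                    have h1' := norm_had_le (D0 (ℓ+1)) (lam (ℓ+1) - lam0 (ℓ+1))
                    have h2' := norm_had_le (D1 (ℓ+1)) (lam (ℓ+1))
                    rw [norm_smul, Real.norm_eq_abs, abs_of_nonneg hε0]
                    have := mul_le_mul_of_nonneg_left h2' hε0
                    linarith
      -- the S recursion
      have hSrec : S ℓ = ‖W ℓ‖ * (‖D0 (ℓ+1)‖ * S (ℓ+1) + ‖D1 (ℓ+1)‖ * P (ℓ+1)) := by
        simp only [hSdef, hPdef]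
        exact S_rec L ℓ (by omega) ‖w‖ (fun k => ‖W (k-1)‖) (fun k => ‖D0 k‖)
          (fun k => ‖D1 k‖)
      have hgrec : g (m+1) = ‖W ℓ‖ * (‖D0 (ℓ+1)‖ * g m
          + ‖D1 (ℓ+1)‖ * (S (ℓ+1) + g m)) := by
        calc g (m+1) = ‖W (L-(m+1))‖ * (‖D0 (L-m)‖ * g m + ‖D1 (L-m)‖ * (S (L-m) + g m)) := by
              rw [hgdef]; exact gAux_succ L _ _ _ S m
          _ = ‖W ℓ‖ * (‖D0 (ℓ+1)‖ * g m + ‖D1 (ℓ+1)‖ * (S (ℓ+1) + g m)) := by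
              rw [← h1]
      -- arithmetic
      have hy' : ‖lam (ℓ+1)‖ ≤ P (ℓ+1) + (ε * S (ℓ+1) + g m * ε ^ 2) := by
        have := hx
        linarith [hy]
      have key : ‖D0 (ℓ+1)‖ * ‖lam (ℓ+1) - lam0 (ℓ+1)‖ + ε * (‖D1 (ℓ+1)‖ * ‖lam (ℓ+1)‖)
          ≤ ε * (‖D0 (ℓ+1)‖ * S (ℓ+1) + ‖D1 (ℓ+1)‖ * P (ℓ+1))
            + (‖D0 (ℓ+1)‖ * g m + ‖D1 (ℓ+1)‖ * (S (ℓ+1) + g m)) * ε ^ 2 :=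
        arith_key ε _ _ _ _ _ _ _ hε0 hε1 (norm_nonneg _) (norm_nonneg _) (hgnn m) hx hy'
      calc ‖lam ℓ - lam0 ℓ‖ ≤ ‖W ℓ‖ * (‖D0 (ℓ+1)‖ * ‖lam (ℓ+1) - lam0 (ℓ+1)‖
            + ε * (‖D1 (ℓ+1)‖ * ‖lam (ℓ+1)‖)) :=
            hbound
        _ ≤ ‖W ℓ‖ * (ε * (‖D0 (ℓ+1)‖ * S (ℓ+1) + ‖D1 (ℓ+1)‖ * P (ℓ+1))
              + (‖D0 (ℓ+1)‖ * g m + ‖D1 (ℓ+1)‖ * (S (ℓ+1) + g m)) * ε ^ 2) :=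
            mul_le_mul_of_nonneg_left key (norm_nonneg _)
        _ = ε * S ℓ + g (m+1) * ε ^ 2 := by rw [hSrec, hgrec]; ring
  -- conclude
  intro ℓ hℓ
  have hm : L - (L - ℓ) = ℓ := by omega
  have h := main (L - ℓ) (by omega)
  rw [hm] at h
  have hgC : g (L - ℓ) ≤ ∑ m ∈ Finset.range (L+1), g m :=
    Finset.single_le_sum (fun m _ => hgnn m) (Finset.mem_range.mpr (by omega))
  have hε2 : 0 ≤ ε ^ 2 := sq_nonneg ε
  have hSℓ : ε * S ℓ = ε * (‖w‖ * (∏ k ∈ Finset.Icc (ℓ+1) L, ‖W (k-1)‖) *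
      ∑ i ∈ Finset.Icc (ℓ+1) L, ‖D1 i‖ * ∏ k ∈ (Finset.Icc (ℓ+1) L).erase i, ‖D0 k‖) := by
    rw [hSdef]
  rw [← hSℓ]
  have := mul_le_mul_of_nonneg_right hgC hε2
  linarith
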